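/- Under the DAG where binary M affects binary Y, M affects R^M, M affects R^Y, and R^M affects R^Y (R^Y ⊥ Y | (M, R^M)), the parameters P(Y=1|M=1), P(Y=1|M=0), P(R^Y=1|M=1,R^M=1), P(R^Y=1|M=0,R^M=1) are identified from the observed-data probabilities via P(Y=1|M=1) = P_{1111}/(P_{1111}+P_{1011}), P(Y=1|M=0) = P_{0111}/(P_{0111}+P_{0011}), P(R^Y=1|M=1,R^M=1) = (P_{1111}+P_{1011})/(P_{1111}+P_{1011}+P_{1+10}), and P(R^Y=1|M=0,R^M=1) = (P_{0111}+P_{0011})/(P_{0111}+P_{0011}+P_{0+10}). -/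
import Mathlib


open Finset
open scoped Classical

/-- The probability of the event `A` under the probability mass function `p`. -/
noncomputable def pr {Ω : Type*} [Fintype Ω] (p : Ω → ℝ) (A : Ω → Prop) : ℝ :=
  ∑ ω, if A ω then p ω else 0

lemma pr_congr {Ω : Type*} [Fintype Ω] (p : Ω → ℝ) {A B : Ω → Prop}
    (h : ∀ ω, A ω ↔ B ω) : pr p A = pr p B := by
  unfold pr
  refine Finset.sum_congr rfl fun ω _ => ?_
  simp [h ω]

lemma pr_split {Ω : Type*} [Fintype Ω] (p : Ω → ℝ) (A : Ω → Prop) (f : Ω → Bool) :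
    pr p (fun ω => A ω ∧ f ω = true) + pr p (fun ω => A ω ∧ f ω = false) = pr p A := by
  unfold pr
  rw [← Finset.sum_add_distrib]
  refine Finset.sum_congr rfl fun ω _ => ?_
  by_cases hA : A ω <;> cases hf : f ω <;> simp [hA, hf]

/-- Under the DAG where `M → Y`, `M → R^M`, `M → R^Y`, `R^M → R^Y` (i.e.
`Y ⊥ R^M | M` and `Y ⊥ R^Y | (M, R^M)`), the parameters `P(Y=1|M=m)` and
`P(R^Y=1|M=m, R^M=1)` are identified from the observed-data probabilities:
`P(Y=1|M=m) = P_{m111}/(P_{m111}+P_{m011})` and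
`P(R^Y=1|M=m, R^M=1) = (P_{m111}+P_{m011})/(P_{m111}+P_{m011}+P_{m+10})`. -/
theorem identified_conditionals_fig2
    {Ω : Type*} [Fintype Ω]
    (p : Ω → ℝ) (hp0 : ∀ ω, 0 ≤ p ω) (hp1 : ∑ ω, p ω = 1)
    (M Y RM RY : Ω → Bool)
    -- Y ⊥ R^M | M
    (hCI1 : ∀ m y r,
      pr p (fun ω => M ω = m) * pr p (fun ω => M ω = m ∧ Y ω = y ∧ RM ω = r) =
        pr p (fun ω => M ω = m ∧ Y ω = y) * pr p (fun ω => M ω = m ∧ RM ω = r))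
    -- Y ⊥ R^Y | (M, R^M)
    (hCI2 : ∀ m y r s,
      pr p (fun ω => M ω = m ∧ RM ω = r) *
          pr p (fun ω => M ω = m ∧ RM ω = r ∧ Y ω = y ∧ RY ω = s) =
        pr p (fun ω => M ω = m ∧ RM ω = r ∧ Y ω = y) *
          pr p (fun ω => M ω = m ∧ RM ω = r ∧ RY ω = s))
    -- positivity of the relevant conditioning events
    (hpos1 : ∀ m, 0 < pr p (fun ω => M ω = m))
    (hpos2 : ∀ m, 0 < pr p (fun ω => M ω = m ∧ RM ω = true))
    (hpos3 : ∀ m, 0 < pr p (fun ω => M ω = m ∧ RM ω = true ∧ RY ω = true)) :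
    ∀ m : Bool,
      -- P(Y=1 | M=m) = P_{m111} / (P_{m111} + P_{m011})
      (pr p (fun ω => Y ω = true ∧ M ω = m) / pr p (fun ω => M ω = m) =
        pr p (fun ω => M ω = m ∧ Y ω = true ∧ RM ω = true ∧ RY ω = true) /
          (pr p (fun ω => M ω = m ∧ Y ω = true ∧ RM ω = true ∧ RY ω = true) +
            pr p (fun ω => M ω = m ∧ Y ω = false ∧ RM ω = true ∧ RY ω = true))) ∧
      -- P(R^Y=1 | M=m, R^M=1) = (P_{m111}+P_{m011}) / (P_{m111}+P_{m011}+P_{m+10})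
      (pr p (fun ω => RY ω = true ∧ M ω = m ∧ RM ω = true) /
          pr p (fun ω => M ω = m ∧ RM ω = true) =
        (pr p (fun ω => M ω = m ∧ Y ω = true ∧ RM ω = true ∧ RY ω = true) +
            pr p (fun ω => M ω = m ∧ Y ω = false ∧ RM ω = true ∧ RY ω = true)) /
          (pr p (fun ω => M ω = m ∧ Y ω = true ∧ RM ω = true ∧ RY ω = true) +
            pr p (fun ω => M ω = m ∧ Y ω = false ∧ RM ω = true ∧ RY ω = true) +
            pr p (fun ω => M ω = m ∧ RM ω = true ∧ RY ω = false))) := by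
  intro m
  set a1 := pr p (fun ω => M ω = m ∧ RM ω = true ∧ Y ω = true) with ha1
  set a0 := pr p (fun ω => M ω = m ∧ RM ω = true ∧ Y ω = false) with ha0
  set b := pr p (fun ω => M ω = m ∧ RM ω = true ∧ RY ω = true) with hbdef
  set b0 := pr p (fun ω => M ω = m ∧ RM ω = true ∧ RY ω = false) with hb0def
  set c := pr p (fun ω => M ω = m ∧ RM ω = true) with hcdef
  set d := pr p (fun ω => M ω = m) with hddef
  set q1 := pr p (fun ω => M ω = m ∧ RM ω = true ∧ Y ω = true ∧ RY ω = true) with hq1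
  set q0 := pr p (fun ω => M ω = m ∧ RM ω = true ∧ Y ω = false ∧ RY ω = true) with hq0
  have hc : 0 < c := hpos2 m
  have hd : 0 < d := hpos1 m
  have hb : 0 < b := hpos3 m
  -- rewrite goal events
  have e1 : pr p (fun ω => Y ω = true ∧ M ω = m) = pr p (fun ω => M ω = m ∧ Y ω = true) := by
    apply pr_congr; intro ω; tauto
  have e2 : pr p (fun ω => M ω = m ∧ Y ω = true ∧ RM ω = true ∧ RY ω = true) = q1 := by
    apply pr_congr; intro ω; tauto
  have e3 : pr p (fun ω => M ω = m ∧ Y ω = false ∧ RM ω = true ∧ RY ω = true) = q0 := by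
    apply pr_congr; intro ω; tauto
  have e4 : pr p (fun ω => RY ω = true ∧ M ω = m ∧ RM ω = true) = b := by
    apply pr_congr; intro ω; tauto
  -- splits
  have s1 : a1 + a0 = c := by
    have := pr_split p (fun ω => M ω = m ∧ RM ω = true) Y
    rw [show (pr p fun ω => (M ω = m ∧ RM ω = true) ∧ Y ω = true) = a1 from
         pr_congr p (by intro ω; tauto),
       show (pr p fun ω => (M ω = m ∧ RM ω = true) ∧ Y ω = false) = a0 from
         pr_congr p (by intro ω; tauto)] at this
    exact this
  have s2 : q1 + q0 = b := by
    have := pr_split p (fun ω => M ω = m ∧ RM ω = true ∧ RY ω = true) Y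
    rw [show (pr p fun ω => (M ω = m ∧ RM ω = true ∧ RY ω = true) ∧ Y ω = true) = q1 from
         pr_congr p (by intro ω; tauto),
       show (pr p fun ω => (M ω = m ∧ RM ω = true ∧ RY ω = true) ∧ Y ω = false) = q0 from
         pr_congr p (by intro ω; tauto)] at this
    exact this
  have s3 : b + b0 = c := by
    have := pr_split p (fun ω => M ω = m ∧ RM ω = true) RY
    rw [show (pr p fun ω => (M ω = m ∧ RM ω = true) ∧ RY ω = true) = b from
         pr_congr p (by intro ω; tauto),
       show (pr p fun ω => (M ω = m ∧ RM ω = true) ∧ RY ω = false) = b0 from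
         pr_congr p (by intro ω; tauto)] at this
    exact this
  -- CI facts
  have ci2 : c * q1 = a1 * b := hCI2 m true true true
  have ci1 : d * a1 = pr p (fun ω => M ω = m ∧ Y ω = true) * c := by
    have := hCI1 m true true
    rw [show (pr p fun ω => M ω = m ∧ Y ω = true ∧ RM ω = true) = a1 from
         pr_congr p (by intro ω; tauto)] at this
    exact this
  constructor
  · rw [e1, e2, e3, s2]
    rw [div_eq_div_iff (ne_of_gt hd) (ne_of_gt hb)]
    apply mul_right_cancel₀ (ne_of_gt hc)
    linear_combination (-b) * ci1 + (-d) * ci2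
  · rw [e4, e2, e3, s2]
    have : b + b0 = c := s3
    rw [show b + pr p (fun ω => M ω = m ∧ RM ω = true ∧ RY ω = false) = c from s3]
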